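/- arXiv:math/0102166 — 4 statements merged into one kernel-verified Lean document; each statement's English description precedes it below -/
import Mathlib

section
/- For every natural number n ≥ 1, the space of injective maps from Fin n to the unit circle S¹ = {z ∈ ℂ : |z| = 1} (i.e. the ordered configuration space of n labeled points on the circle, with the subspace topology from (S¹)ⁿ) has exactly (n-1)! connected components. -/
/-!
Measure every point by its anticlockwise angle from the point labelled `0`; for an injective
configuration these `n - 1` angles are distinct numbers in `(0, 2π)`, continuous in the
configuration. The permutation sorting them is therefore locally constant, and its fibre over `σ`
is the continuous image of `Circle × {v | v ∘ σ strictly increasing, 0 < v < 2π}`, a connected set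
(the second factor is convex). So the components are exactly these fibres, one for each of the
`(n - 1)!` permutations.
-/

open Function Set
open scoped Real Nat

theorem Tuple.eq_sort_iff_strictMono {α : Type*} [LinearOrder α] {n : ℕ} {f : Fin n → α}
    {σ : Equiv.Perm (Fin n)} (hf : Injective f) : σ = Tuple.sort f ↔ StrictMono (f ∘ σ) := by
  rw [Tuple.eq_sort_iff]
  refine ⟨fun h ↦ h.1.strictMono_of_injective (hf.comp σ.injective), fun h ↦ ⟨h.monotone, ?_⟩⟩
  exact fun i j hij hfij ↦ absurd hfij (h hij).ne

theorem isOpen_setOf_strictMono {ι α : Type*} [Finite ι] [Preorder ι] [TopologicalSpace α]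
    [LinearOrder α] [OrderClosedTopology α] : IsOpen {f : ι → α | StrictMono f} := by
  simp only [StrictMono, ofPred_forall]
  exact isOpen_iInter_of_finite fun i ↦ isOpen_iInter_of_finite fun j ↦
    isOpen_iInter_of_finite fun _ ↦ isOpen_lt (continuous_apply i) (continuous_apply j)

theorem convex_setOf_strictMono {𝕜 ι β : Type*} [Semiring 𝕜] [PartialOrder 𝕜] [Preorder ι]
    [AddCommMonoid β] [PartialOrder β] [Module 𝕜 β] [PosSMulStrictMono 𝕜 β]
    [AddLeftStrictMono β] [AddRightStrictMono β] :
    Convex 𝕜 {f : ι → β | StrictMono f} :=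
  convex_iff_forall_pos.2 fun _ hf _ hg _ _ ha hb _ ↦ (hf.const_smul ha).add (hg.const_smul hb)

theorem IsLocallyConstant.natCard_connectedComponents {X ι : Type*} [TopologicalSpace X]
    {f : X → ι} (hf : IsLocallyConstant f) (hfiber : ∀ i, IsConnected (f ⁻¹' {i})) :
    Nat.card (ConnectedComponents X) = Nat.card ι :=
  Nat.card_congr <| ConnectedComponents.equivOfIsClopenOfIsConnected hf.isClopen_fiber
    (pairwise_disjoint_fiber f) (iUnion_eq_univ_iff.2 fun x ↦ ⟨f x, rfl⟩) hfiber

namespace Circle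

open Complex

variable {x y : Circle}

@[simp]
theorem angleDiff_self (x : Circle) : angleDiff x x = 0 := by
  simp [angleDiff]

theorem angleDiff_exp_mul {v : ℝ} (hv : v ∈ Ico 0 (2 * π)) : angleDiff x (exp v * x) = v :=
  exp_injOn_Ico (by simp) ⟨angleDiff_nonneg _ _, angleDiff_lt_two_pi _ _⟩ hv <|
    mul_right_cancel exp_angleDiff_mul

theorem angleDiff_injective (x : Circle) : Injective (angleDiff x) :=
  LeftInverse.injective (g := fun v ↦ exp v * x) fun _ ↦ exp_angleDiff_mul

/-- `exp π * w = -w`, so the right-hand side is the argument of `y / x` taken in `(0, 2π]`,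
which is continuous away from `y = x`. -/
theorem angleDiff_eq_arg_add_pi (h : x ≠ y) :
    angleDiff x y = arg ((exp π * (y / x) : Circle) : ℂ) + π := by
  set w := exp π * (y / x)
  refine exp_injOn_Ioc (by simp) ⟨angleDiff_pos h, (angleDiff_lt_two_pi x y).le⟩
    ⟨by linarith [neg_pi_lt_arg (w : ℂ)], by linarith [arg_le_pi (w : ℂ)]⟩ ?_
  rw [exp_add, exp_arg, mul_right_comm, ← exp_add, ← two_mul, exp_two_pi, one_mul]
  exact eq_div_iff_mul_eq'.2 exp_angleDiff_mul

theorem continuousAt_angleDiff (h : x ≠ y) :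
    ContinuousAt (fun p : Circle × Circle ↦ angleDiff p.1 p.2) (x, y) := by
  have hslit : ((exp π * (y / x) : Circle) : ℂ) ∈ slitPlane := by
    refine mem_slitPlane_iff_arg.2 ⟨fun harg ↦ h ?_, coe_ne_zero _⟩
    have := exp_arg (exp π * (y / x))
    rw [harg] at this
    exact (div_eq_one.1 (mul_eq_left.1 this.symm)).symm
  have hw : Continuous fun p : Circle × Circle ↦ ((exp π * (p.2 / p.1) : Circle) : ℂ) :=
    continuous_subtype_val.comp (by fun_prop)
  have hcont : ContinuousAt
      (fun p : Circle × Circle ↦ arg ((exp π * (p.2 / p.1) : Circle) : ℂ) + π) (x, y) :=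
    ((continuousAt_arg hslit).comp (x := (x, y)) hw.continuousAt).add continuousAt_const
  refine hcont.congr (Filter.eventuallyEq_of_mem
    ((isOpen_ne_fun continuous_fst continuous_snd).mem_nhds h) fun p hp ↦ ?_)
  exact (angleDiff_eq_arg_add_pi hp).symm

end Circle

abbrev ConfigurationSpace (X : Type*) (n : ℕ) : Type _ := {x : Fin n → X // Injective x}

namespace CircleConfiguration

open Circle

variable {m : ℕ}

noncomputable def angles (x : Fin (m + 1) → Circle) (i : Fin m) : ℝ := angleDiff (x 0) (x i.succ)

noncomputable def ofAngles (z : Circle) (v : Fin m → ℝ) : Fin (m + 1) → Circle :=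
  Fin.cons z fun i ↦ exp (v i) * z

theorem ofAngles_angles (x : Fin (m + 1) → Circle) : ofAngles (x 0) (angles x) = x := by
  conv_rhs => rw [← Fin.cons_self_tail x]
  exact congrArg _ (funext fun _ ↦ exp_angleDiff_mul)

theorem angles_ofAngles {z : Circle} {v : Fin m → ℝ} (hv : ∀ i, v i ∈ Ico 0 (2 * π)) :
    angles (ofAngles z v) = v :=
  funext fun i ↦ by simpa [angles, ofAngles] using angleDiff_exp_mul (hv i)

theorem injective_angles {x : Fin (m + 1) → Circle} (hx : Injective x) : Injective (angles x) :=
  (angleDiff_injective (x 0)).comp (hx.comp (Fin.succ_injective m))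

theorem injective_ofAngles {z : Circle} {v : Fin m → ℝ} (hv : Injective v)
    (hmem : ∀ i, v i ∈ Ioo 0 (2 * π)) : Injective (ofAngles z v) := by
  have hangle (i : Fin m) : angleDiff z (exp (v i) * z) = v i :=
    angleDiff_exp_mul (Ioo_subset_Ico_self (hmem i))
  refine Fin.cons_injective_iff.2 ⟨?_, Injective.of_comp (f := angleDiff z) ?_⟩
  · rintro ⟨i, hi⟩
    have := hangle i
    rw [show exp (v i) * z = z from hi, angleDiff_self] at this
    exact (hmem i).1.ne this
  · simpa [Function.comp_def, hangle] using hv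

noncomputable def cyclicOrder (x : ConfigurationSpace Circle (m + 1)) : Equiv.Perm (Fin m) :=
  Tuple.sort (angles x.1)

theorem cyclicOrder_eq_iff {x : ConfigurationSpace Circle (m + 1)} {σ : Equiv.Perm (Fin m)} :
    cyclicOrder x = σ ↔ StrictMono (angles x.1 ∘ σ) :=
  eq_comm.trans (Tuple.eq_sort_iff_strictMono (injective_angles x.2))

theorem continuous_angles : Continuous fun x : ConfigurationSpace Circle (m + 1) ↦ angles x.1 :=
  continuous_pi fun i ↦ continuous_iff_continuousAt.2 fun x ↦
    (continuousAt_angleDiff (x.2.ne (Fin.succ_ne_zero i).symm)).comp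
      (f := fun x : ConfigurationSpace Circle (m + 1) ↦ (x.1 0, x.1 i.succ))
      (((continuous_apply 0).comp continuous_subtype_val).prodMk
        ((continuous_apply i.succ).comp continuous_subtype_val)).continuousAt

theorem isLocallyConstant_cyclicOrder : IsLocallyConstant (cyclicOrder (m := m)) := by
  refine IsLocallyConstant.iff_isOpen_fiber.2 fun σ ↦ ?_
  have hfiber : cyclicOrder ⁻¹' {σ} = (fun x ↦ angles x.1 ∘ σ) ⁻¹' {v | StrictMono v} :=
    ext fun _ ↦ cyclicOrder_eq_iff
  rw [hfiber]
  exact isOpen_setOf_strictMono.preimage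
    (continuous_pi fun i ↦ (continuous_apply (σ i)).comp continuous_angles)

def chamber (σ : Equiv.Perm (Fin m)) : Set (Fin m → ℝ) :=
  {v | StrictMono (v ∘ σ)} ∩ univ.pi fun _ ↦ Ioo 0 (2 * π)

theorem convex_chamber (σ : Equiv.Perm (Fin m)) : Convex ℝ (chamber σ) :=
  (convex_setOf_strictMono.linear_preimage (LinearMap.funLeft ℝ ℝ σ)).inter
    (convex_pi fun _ _ ↦ convex_Ioo 0 (2 * π))

theorem chamber_nonempty (σ : Equiv.Perm (Fin m)) : (chamber σ).Nonempty := by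
  refine ⟨fun i ↦ π * (σ.symm i + 1) / (m + 1), fun i j hij ↦ ?_, fun i _ ↦ ⟨by positivity, ?_⟩⟩
  · simp only [comp_apply, Equiv.symm_apply_apply]
    gcongr
    exact_mod_cast hij
  · rw [div_lt_iff₀ (by positivity)]
    have : ((σ.symm i : ℕ) : ℝ) + 1 ≤ m := by exact_mod_cast (σ.symm i).isLt
    nlinarith [Real.pi_pos]

theorem continuous_uncurry_ofAngles : Continuous (uncurry (ofAngles (m := m))) :=
  continuous_fst.finCons (A := fun _ ↦ Circle) (continuous_pi fun i ↦
    (Circle.exp.continuous.comp ((continuous_apply i).comp continuous_snd)).mul continuous_fst)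

theorem image_val_cyclicOrder_fiber (σ : Equiv.Perm (Fin m)) :
    Subtype.val '' (cyclicOrder ⁻¹' {σ}) = uncurry ofAngles '' (univ ×ˢ chamber σ) := by
  apply Subset.antisymm
  · rintro _ ⟨x, hx, rfl⟩
    refine ⟨(x.1 0, angles x.1), ⟨trivial, cyclicOrder_eq_iff.1 hx, fun i _ ↦ ?_⟩,
      ofAngles_angles x.1⟩
    exact ⟨angleDiff_pos (x.2.ne (Fin.succ_ne_zero i).symm), angleDiff_lt_two_pi _ _⟩
  · rintro _ ⟨⟨z, v⟩, ⟨-, hmono, hmem⟩, rfl⟩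
    have hmem' (i : Fin m) : v i ∈ Ioo 0 (2 * π) := hmem i trivial
    have hv : Injective v := (Equiv.injective_comp σ v).1 hmono.injective
    refine ⟨⟨ofAngles z v, injective_ofAngles hv hmem'⟩, cyclicOrder_eq_iff.2 ?_, rfl⟩
    rwa [angles_ofAngles fun i ↦ Ioo_subset_Ico_self (hmem' i)]

theorem isConnected_cyclicOrder_fiber (σ : Equiv.Perm (Fin m)) :
    IsConnected (cyclicOrder ⁻¹' {σ}) := by
  have himage : IsConnected (Subtype.val '' (cyclicOrder ⁻¹' {σ})) := by
    rw [image_val_cyclicOrder_fiber]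
    exact (isConnected_univ.prod ((convex_chamber σ).isConnected (chamber_nonempty σ))).image _
      continuous_uncurry_ofAngles.continuousOn
  exact ⟨himage.nonempty.of_image,
    Topology.IsInducing.subtypeVal.isPreconnected_image.1 himage.isPreconnected⟩

theorem natCard_connectedComponents (m : ℕ) :
    Nat.card (ConnectedComponents (ConfigurationSpace Circle (m + 1))) = m ! := by
  rw [isLocallyConstant_cyclicOrder.natCard_connectedComponents isConnected_cyclicOrder_fiber,
    Nat.card_perm, Nat.card_fin]

end CircleConfiguration

theorem circle_configuration_components_general (n : ℕ) :
    Nat.card (ConnectedComponents {x : Fin n → Circle // Function.Injective x}) =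
      Nat.factorial (n - 1) := by
  cases n with
  | zero =>
    have : Nonempty {x : Fin 0 → Circle // Injective x} := ⟨⟨default, injective_of_subsingleton _⟩⟩
    exact Nat.card_eq_one_iff_unique.2 ⟨inferInstance, inferInstance⟩
  | succ m => exact CircleConfiguration.natCard_connectedComponents m

/-- The ordered configuration space of `n` labeled points on the unit circle,
i.e. the subspace of injective tuples `x : Fin n → Circle`, has exactly
`(n-1)!` connected components. -/
theorem circle_configuration_components (n : ℕ) (hn : 1 ≤ n) :
    Nat.card (ConnectedComponents {x : Fin n → Circle // Function.Injective x}) =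
      Nat.factorial (n - 1) :=
  circle_configuration_components_general n
end

section
/- Let n ≥ 1 and let L be the set of functions f : ZMod (2n) → Fin n such that f(i + n) = f(i) for all i and every value of f is attained exactly twice. The additive group ZMod (2n) acts on L by rotation, (c • f)(i) = f(i + c). Then the stabilizer of every f ∈ L is exactly the two-element subgroup {0, n} of ZMod (2n), and the rotation action has exactly (n-1)! orbits. -/
lemma csl_n_ne_zero {n : ℕ} (hn : 1 ≤ n) : (n : ZMod (2 * n)) ≠ 0 := by
  intro h0
  rw [ZMod.natCast_eq_zero_iff] at h0
  have := Nat.le_of_dvd (by omega) h0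
  omega

/-- Key lemma: in a centrally symmetric labeling, the fiber of each value is
exactly `{i, i + n}`. -/
lemma csl_key {n : ℕ} (hn : 1 ≤ n) (f : ZMod (2 * n) → Fin n)
    (h1 : ∀ i : ZMod (2 * n), f (i + (n : ZMod (2 * n))) = f i)
    (h2 : ∀ v : Fin n, Nat.card {i : ZMod (2 * n) // f i = v} = 2) :
    ∀ i j : ZMod (2 * n), f j = f i → j = i ∨ j = i + n := by
  haveI : NeZero (2 * n) := ⟨by omega⟩
  intro i j hj
  have hne : i ≠ i + (n : ZMod (2 * n)) := by
    intro h
    exact csl_n_ne_zero hn (by rw [left_eq_add] at h; exact h)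
  have hsub : ({i, i + (n : ZMod (2 * n))} : Set (ZMod (2 * n))) ⊆ {x | f x = f i} := by
    rintro x (rfl | rfl)
    · rfl
    · exact h1 i
  have hcard : ({x | f x = f i} : Set (ZMod (2 * n))).ncard = 2 := by
    rw [← Nat.card_coe_set_eq]
    exact h2 (f i)
  have heq : ({i, i + (n : ZMod (2 * n))} : Set (ZMod (2 * n))) = {x | f x = f i} :=
    Set.eq_of_subset_of_ncard_le hsub (by rw [hcard, Set.ncard_pair hne]) (Set.toFinite _)
  have : j ∈ ({i, i + (n : ZMod (2 * n))} : Set (ZMod (2 * n))) := by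
    rw [heq]; exact hj
  simpa using this

/-- Labeling associated to a permutation: position `i` gets label `σ (i mod n)`. -/
def cslFrom {n : ℕ} (hn : 1 ≤ n) (σ : Equiv.Perm (Fin n)) :
    ZMod (2 * n) → Fin n :=
  fun i => σ ⟨i.val % n, Nat.mod_lt _ (by omega)⟩

lemma csl_val_mod {n : ℕ} (hn : 1 ≤ n) (i : ZMod (2 * n)) :
    haveI : NeZero (2 * n) := ⟨by omega⟩
    (i + (n : ZMod (2 * n))).val % n = i.val % n := by
  haveI : NeZero (2 * n) := ⟨by omega⟩
  rw [ZMod.val_add, ZMod.val_cast_of_lt (by omega : n < 2 * n),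
    Nat.mod_mod_of_dvd _ ⟨2, by ring⟩, Nat.add_mod_right]

lemma cslFrom_periodic {n : ℕ} (hn : 1 ≤ n) (σ : Equiv.Perm (Fin n)) :
    ∀ i : ZMod (2 * n), cslFrom hn σ (i + (n : ZMod (2 * n))) = cslFrom hn σ i := by
  intro i
  unfold cslFrom
  congr 1
  exact Fin.ext (csl_val_mod hn i)

lemma cslFrom_fiber {n : ℕ} (hn : 1 ≤ n) (σ : Equiv.Perm (Fin n)) (v : Fin n) :
    Nat.card {i : ZMod (2 * n) // cslFrom hn σ i = v} = 2 := by
  haveI : NeZero (2 * n) := ⟨by omega⟩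
  set r : ℕ := (σ.symm v).val with hr
  have hrn : r < n := (σ.symm v).isLt
  have hmem : ∀ i : ZMod (2 * n), cslFrom hn σ i = v ↔ i.val % n = r := by
    intro i
    unfold cslFrom
    constructor
    · intro h
      have : (⟨i.val % n, Nat.mod_lt _ (by omega)⟩ : Fin n) = σ.symm v := by
        rw [← h]; simp
      exact congrArg Fin.val this
    · intro h
      have : (⟨i.val % n, Nat.mod_lt _ (by omega)⟩ : Fin n) = σ.symm v := Fin.ext h
      rw [this]; simp
  have hset : {i : ZMod (2 * n) | cslFrom hn σ i = v} =
      {((r : ℕ) : ZMod (2 * n)), (((r + n : ℕ)) : ZMod (2 * n))} := by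
    ext i
    simp only [Set.mem_setOf_eq, hmem, Set.mem_insert_iff, Set.mem_singleton_iff]
    constructor
    · intro h
      have hlt : i.val < 2 * n := ZMod.val_lt i
      have hmod := Nat.div_add_mod i.val n
      have hq : i.val / n ≤ 1 := by
        by_contra hq
        push_neg at hq
        have := Nat.le_div_iff_mul_le (by omega : 0 < n) |>.mp (by omega : 2 ≤ i.val / n)
        omega
      interval_cases h' : i.val / n
      · left
        have hvv : i.val = r := by omega
        rw [← hvv, ZMod.natCast_rightInverse i]
      · right
        have hvv : i.val = r + n := by omega
        rw [← hvv, ZMod.natCast_rightInverse i]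
    · rintro (rfl | rfl)
      · rw [ZMod.val_cast_of_lt (by omega : r < 2 * n)]
        exact Nat.mod_eq_of_lt hrn
      · rw [ZMod.val_cast_of_lt (by omega : r + n < 2 * n), Nat.add_mod_right]
        exact Nat.mod_eq_of_lt hrn
  have hne : ((r : ℕ) : ZMod (2 * n)) ≠ (((r + n : ℕ)) : ZMod (2 * n)) := by
    intro h
    have h1 : ((r : ℕ) : ZMod (2 * n)).val = r := ZMod.val_cast_of_lt (by omega)
    have h2 : (((r + n : ℕ)) : ZMod (2 * n)).val = r + n := ZMod.val_cast_of_lt (by omega)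
    rw [h] at h1
    omega
  have hcongr : Nat.card {i : ZMod (2 * n) // cslFrom hn σ i = v} =
      Nat.card ({((r : ℕ) : ZMod (2 * n)), (((r + n : ℕ)) : ZMod (2 * n))} : Set (ZMod (2 * n))) :=
    Nat.card_congr (Equiv.setCongr hset)
  rw [hcongr, Nat.card_coe_set_eq, Set.ncard_pair hne]

/-- Reading off the labels of edges `0, …, n-1` gives a bijection. -/
lemma csl_inj {n : ℕ} (hn : 1 ≤ n) (f : ZMod (2 * n) → Fin n)
    (h1 : ∀ i : ZMod (2 * n), f (i + (n : ZMod (2 * n))) = f i)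
    (h2 : ∀ v : Fin n, Nat.card {i : ZMod (2 * n) // f i = v} = 2) :
    Function.Bijective (fun k : Fin n => f ((k.val : ℕ) : ZMod (2 * n))) := by
  rw [Fintype.bijective_iff_injective_and_card]
  refine ⟨?_, rfl⟩
  intro k j h
  simp only at h
  rcases csl_key hn f h1 h2 ((j.val : ℕ) : ZMod (2 * n)) ((k.val : ℕ) : ZMod (2 * n)) h with
    hc | hc
  · have hk : ((k.val : ℕ) : ZMod (2 * n)).val = k.val := ZMod.val_cast_of_lt (by omega)
    have hj' : ((j.val : ℕ) : ZMod (2 * n)).val = j.val := ZMod.val_cast_of_lt (by omega)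
    exact Fin.ext (by rw [← hk, ← hj', hc])
  · exfalso
    have hck : ((k.val : ℕ) : ZMod (2 * n)) = (((j.val + n : ℕ)) : ZMod (2 * n)) := by
      rw [hc]; push_cast; ring
    have hk' : ((k.val : ℕ) : ZMod (2 * n)).val = k.val := ZMod.val_cast_of_lt (by omega)
    have hj' : (((j.val + n : ℕ)) : ZMod (2 * n)).val = j.val + n :=
      ZMod.val_cast_of_lt (by omega)
    rw [hck, hj'] at hk'
    omega

/-- A periodic labeling is recovered from its values on `0, …, n-1`. -/
lemma csl_from_to {n : ℕ} (hn : 1 ≤ n) (f : ZMod (2 * n) → Fin n)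
    (h1 : ∀ i : ZMod (2 * n), f (i + (n : ZMod (2 * n))) = f i)
    (i : ZMod (2 * n)) :
    f (((i.val % n : ℕ)) : ZMod (2 * n)) = f i := by
  haveI : NeZero (2 * n) := ⟨by omega⟩
  have hlt : i.val < 2 * n := ZMod.val_lt i
  have hmod := Nat.div_add_mod i.val n
  have hq : i.val / n ≤ 1 := by
    by_contra hq
    push_neg at hq
    have := Nat.le_div_iff_mul_le (by omega : 0 < n) |>.mp (by omega : 2 ≤ i.val / n)
    omega
  interval_cases h' : i.val / n
  · have hvv : i.val % n = i.val := by omega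
    rw [hvv, ZMod.natCast_rightInverse i]
  · have hv : i.val % n + n = i.val := by omega
    have hcast : ((i.val % n + n : ℕ) : ZMod (2 * n)) = i := by
      rw [hv]; exact ZMod.natCast_rightInverse i
    conv_rhs => rw [← hcast]
    rw [Nat.cast_add, h1]

/-- Permutations of `Fin (m+1)` fixing `0` are counted by `m!`. -/
lemma csl_card_fix (m : ℕ) :
    Nat.card {σ : Equiv.Perm (Fin (m + 1)) // σ 0 = 0} = Nat.factorial m := by
  have e : {σ : Equiv.Perm (Fin (m + 1)) // σ 0 = 0} ≃ Equiv.Perm (Fin m) :=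
    { toFun := fun σ => (Equiv.Perm.decomposeFin σ.1).2
      invFun := fun τ => ⟨Equiv.Perm.decomposeFin.symm (0, τ),
        Equiv.Perm.decomposeFin_symm_apply_zero 0 τ⟩
      left_inv := by
        rintro ⟨σ, hσ⟩
        have hσ' : Equiv.Perm.decomposeFin.symm
            ((Equiv.Perm.decomposeFin σ).1, (Equiv.Perm.decomposeFin σ).2) = σ := by
          rw [Prod.mk.eta]; exact Equiv.symm_apply_apply _ _
        have h1 : (Equiv.Perm.decomposeFin σ).1 = 0 := by
          rw [← hσ]
          conv_rhs => rw [← hσ', Equiv.Perm.decomposeFin_symm_apply_zero]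
        refine Subtype.ext ?_
        show Equiv.Perm.decomposeFin.symm (0, (Equiv.Perm.decomposeFin σ).2) = σ
        rw [← h1, Prod.mk.eta]
        exact Equiv.symm_apply_apply _ _
      right_inv := fun τ => by
        simp only [Equiv.apply_symm_apply] }
  rw [Nat.card_congr e, Nat.card_eq_fintype_card, Fintype.card_perm, Fintype.card_fin]

lemma csl_card_fix' {n : ℕ} [NeZero n] (hn : 1 ≤ n) :
    Nat.card {σ : Equiv.Perm (Fin n) // σ 0 = 0} = Nat.factorial (n - 1) := by
  obtain ⟨m, rfl⟩ := Nat.exists_eq_succ_of_ne_zero (NeZero.ne n)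
  simpa using csl_card_fix m

lemma cslFrom_zero {n : ℕ} [NeZero n] (hn : 1 ≤ n) (σ : Equiv.Perm (Fin n)) (hσ : σ 0 = 0)
    (h0 : (0:ℕ) < n) : cslFrom hn σ 0 = ⟨0, h0⟩ := by
  haveI : NeZero (2 * n) := ⟨by omega⟩
  unfold cslFrom
  have hf : (⟨(0 : ZMod (2 * n)).val % n, Nat.mod_lt _ (by omega)⟩ : Fin n) = 0 := by
    refine Fin.ext ?_
    simp [ZMod.val_zero]
  rw [hf, hσ]
  rfl

lemma csl_to_from {n : ℕ} (hn : 1 ≤ n) (σ : Equiv.Perm (Fin n)) (k : Fin n) :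
    cslFrom hn σ ((k.val : ℕ) : ZMod (2 * n)) = σ k := by
  unfold cslFrom
  congr 1
  refine Fin.ext ?_
  show ((k.val : ℕ) : ZMod (2 * n)).val % n = k.val
  rw [ZMod.val_cast_of_lt (by omega : k.val < 2 * n)]
  exact Nat.mod_eq_of_lt k.isLt

/-- For the set `L` of centrally symmetric edge-labelings of a `2n`-gon
(functions `f : ZMod (2n) → Fin n` with `f (i + n) = f i` and each label used
exactly twice), the stabilizer of every `f ∈ L` under the rotation action of
`ZMod (2n)` is exactly `{0, n}`, and the rotation action has exactly `(n-1)!`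
orbits. -/
theorem centrally_symmetric_labelings_rotation (n : ℕ) (hn : 1 ≤ n)
    (L : Set (ZMod (2 * n) → Fin n))
    (hL : L = {f : ZMod (2 * n) → Fin n |
        (∀ i : ZMod (2 * n), f (i + (n : ZMod (2 * n))) = f i) ∧
        (∀ v : Fin n, Nat.card {i : ZMod (2 * n) // f i = v} = 2)}) :
    (∀ f ∈ L, {c : ZMod (2 * n) | ∀ i, f (i + c) = f i} =
        {0, (n : ZMod (2 * n))}) ∧
    Nat.card {O : Set (ZMod (2 * n) → Fin n) |
        ∃ f ∈ L, O = {g | ∃ c : ZMod (2 * n), ∀ i, g i = f (i + c)}} =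
      Nat.factorial (n - 1) := by
  haveI : NeZero (2 * n) := ⟨by omega⟩
  haveI : NeZero n := ⟨by omega⟩
  constructor
  · -- stabilizer
    rintro f hf
    rw [hL] at hf
    obtain ⟨h1, h2⟩ := hf
    ext c
    simp only [Set.mem_setOf_eq, Set.mem_insert_iff, Set.mem_singleton_iff]
    constructor
    · intro hc
      have h0 := hc 0
      rw [zero_add] at h0
      rcases csl_key hn f h1 h2 0 c h0 with h | h
      · exact Or.inl h
      · right; rw [h, zero_add]
    · rintro (rfl | rfl)
      · simp
      · exact h1
  · -- orbit count
    subst hL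
    have hzero : (0 : ℕ) < n := hn
    set Lset : Set (ZMod (2 * n) → Fin n) :=
      {f | (∀ i : ZMod (2 * n), f (i + (n : ZMod (2 * n))) = f i) ∧
        (∀ v : Fin n, Nat.card {i : ZMod (2 * n) // f i = v} = 2)} with hLset
    -- rotations stay in Lset
    have rot_mem : ∀ f ∈ Lset, ∀ c : ZMod (2 * n), (fun i => f (i + c)) ∈ Lset := by
      rintro f ⟨h1, h2⟩ c
      refine ⟨fun i => ?_, fun v => ?_⟩
      · show f (i + (n : ZMod (2 * n)) + c) = f (i + c)
        rw [add_right_comm]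
        exact h1 (i + c)
      · have e : {i : ZMod (2 * n) // f (i + c) = v} ≃ {i : ZMod (2 * n) // f i = v} :=
          (Equiv.addRight c).subtypeEquiv (fun i => Iff.rfl)
        rw [Nat.card_congr e]
        exact h2 v
    set T : Set (ZMod (2 * n) → Fin n) :=
      {f | f ∈ Lset ∧ f 0 = ⟨0, hzero⟩} with hT
    -- Step 1 : the orbit set is in bijection with T
    have hcard1 : Nat.card {O : Set (ZMod (2 * n) → Fin n) |
        ∃ f ∈ Lset, O = {g | ∃ c : ZMod (2 * n), ∀ i, g i = f (i + c)}} = Nat.card T := by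
      have Φmem : ∀ f : T, (({g | ∃ c : ZMod (2 * n), ∀ i, g i =
          (f : ZMod (2 * n) → Fin n) (i + c)} : Set (ZMod (2 * n) → Fin n)) ∈
          {O : Set (ZMod (2 * n) → Fin n) |
            ∃ f ∈ Lset, O = {g | ∃ c : ZMod (2 * n), ∀ i, g i = f (i + c)}}) := by
        rintro ⟨f, hf, _⟩
        exact ⟨f, hf, rfl⟩
      refine (Nat.card_congr (Equiv.ofBijective
        (fun f : T => (⟨_, Φmem f⟩ : {O : Set (ZMod (2 * n) → Fin n) |
          ∃ f ∈ Lset, O = {g | ∃ c : ZMod (2 * n), ∀ i, g i = f (i + c)}}))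
        ⟨?_, ?_⟩)).symm
      · -- injectivity
        rintro ⟨f, ⟨hf1, hf2⟩, hf0⟩ ⟨f', ⟨hf1', hf2'⟩, hf0'⟩ h
        have h' : ({g | ∃ c : ZMod (2 * n), ∀ i, g i = f (i + c)} :
              Set (ZMod (2 * n) → Fin n)) =
            {g | ∃ c : ZMod (2 * n), ∀ i, g i = f' (i + c)} := congrArg Subtype.val h
        have hf'mem : f' ∈ ({g | ∃ c : ZMod (2 * n), ∀ i, g i = f (i + c)} :
            Set (ZMod (2 * n) → Fin n)) := by
          rw [h']
          exact ⟨0, fun i => by rw [add_zero]⟩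
        obtain ⟨c, hc⟩ := hf'mem
        have hfc : f c = f 0 := by
          have h0 := hc 0
          rw [zero_add] at h0
          rw [← h0, hf0', hf0]
        rcases csl_key hn f hf1 hf2 0 c hfc with rfl | hcn
        · refine Subtype.ext (funext fun i => ?_)
          show f i = f' i
          rw [hc i, add_zero]
        · rw [zero_add] at hcn
          subst hcn
          refine Subtype.ext (funext fun i => ?_)
          show f i = f' i
          rw [hc i, hf1 i]
      · -- surjectivity
        rintro ⟨O, f, hf, rfl⟩
        obtain ⟨hf1, hf2⟩ := hf
        have hne : Nonempty {i : ZMod (2 * n) // f i = ⟨0, hzero⟩} := by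
          have hpos : 0 < Nat.card {i : ZMod (2 * n) // f i = ⟨0, hzero⟩} := by
            rw [hf2 ⟨0, hzero⟩]; omega
          exact (Nat.card_pos_iff.mp hpos).1
        obtain ⟨⟨c, hc⟩⟩ := hne
        refine ⟨⟨fun i => f (i + c), ⟨rot_mem f ⟨hf1, hf2⟩ c, by simpa using hc⟩⟩, ?_⟩
        refine Subtype.ext ?_
        show ({g : ZMod (2 * n) → Fin n | ∃ d : ZMod (2 * n), ∀ i, g i = f (i + d + c)}) =
          ({g : ZMod (2 * n) → Fin n | ∃ d : ZMod (2 * n), ∀ i, g i = f (i + d)})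
        ext g
        simp only [Set.mem_setOf_eq]
        constructor
        · rintro ⟨d, hd⟩
          exact ⟨d + c, fun i => by rw [hd i, add_assoc]⟩
        · rintro ⟨d, hd⟩
          exact ⟨d - c, fun i => by rw [hd i]; congr 1; ring⟩
    -- Step 2 : T is in bijection with permutations fixing 0
    have hcard2 : Nat.card T = Nat.card {σ : Equiv.Perm (Fin n) // σ 0 = 0} := by
      have hΦ : ∀ f : T, Function.Bijective
          (fun k : Fin n => (f : ZMod (2 * n) → Fin n) ((k.val : ℕ) : ZMod (2 * n))) :=
        fun ⟨f, ⟨hf1, hf2⟩, _⟩ => csl_inj hn f hf1 hf2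
      have hΦ0 : ∀ f : T, (Equiv.ofBijective _ (hΦ f)) 0 = 0 := by
        rintro ⟨f, ⟨hf1, hf2⟩, hf0⟩
        show f (((0 : Fin n).val : ℕ) : ZMod (2 * n)) = 0
        simp only [Fin.val_zero, Nat.cast_zero]
        rw [hf0]
        rfl
      exact Nat.card_congr
        { toFun := fun f => ⟨Equiv.ofBijective _ (hΦ f), hΦ0 f⟩
          invFun := fun σ => ⟨cslFrom hn σ.1,
            ⟨⟨cslFrom_periodic hn σ.1, cslFrom_fiber hn σ.1⟩,
              cslFrom_zero hn σ.1 σ.2 hzero⟩⟩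
          left_inv := by
            rintro ⟨f, ⟨hf1, hf2⟩, hf0⟩
            refine Subtype.ext (funext fun i => ?_)
            exact csl_from_to hn f hf1 i
          right_inv := by
            rintro ⟨σ, hσ⟩
            refine Subtype.ext (Equiv.ext fun k => ?_)
            exact csl_to_from hn σ k }
    rw [hcard1, hcard2, csl_card_fix' hn]
end

section
/- For every n ≥ 1, the set G of bijections f : ℤ → ℤ satisfying f(x + n) = f(x) + n for all x ∈ ℤ is a subgroup of the permutation group of ℤ under composition, and G is isomorphic as a group to the semidirect product (Fin n → ℤ) ⋊ Equiv.Perm (Fin n), where the symmetric group Equiv.Perm (Fin n) acts on the additive group Fin n → ℤ by permuting coordinates. -/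
/-!
Writing `x = q * n + i` with `0 ≤ i < n` identifies `ℤ` with `ℤ × Fin n` and turns translation by
`n` into the shift `(q, i) ↦ (q + 1, i)`. A permutation commuting with the shift is determined by
the images `(a j, j)` of the points `(0, σ⁻¹ j)`, where `σ` is the permutation it induces on the
shift orbits `ℤ × {i}`; it is then `(q, i) ↦ (q + a (σ i), σ i)`, and composing two such maps
multiplies the pairs `(a, σ)` as in the semidirect product.
-/

open Equiv Subgroup

theorem Subgroup.map_centralizer_singleton {G H : Type*} [Group G] [Group H] (ψ : G ≃* H)
    (t : G) : (centralizer {t}).map (ψ : G →* H) = centralizer {ψ t} := by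
  ext h
  change h ∈ map ψ.toMonoidHom _ ↔ _
  rw [mem_map_equiv, mem_centralizer_singleton_iff, mem_centralizer_singleton_iff,
    ← ψ.injective.eq_iff, map_mul, map_mul, ψ.apply_symm_apply]

theorem Equiv.coe_centralizer_addRight {α : Type*} [AddGroup α] (c : α) :
    (centralizer {Equiv.addRight c} : Set (Perm α)) = {f | ∀ x, f (x + c) = f x + c} := by
  ext f
  simp [mem_centralizer_singleton_iff, Equiv.ext_iff]

namespace ExtendedAffine

variable {ι : Type*}

variable (ι) in
def shift : Perm (ℤ × ι) := prodCongr (Equiv.addRight 1) (Equiv.refl ι)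

lemma apply_eq_of_mem_centralizer_shift {g : Perm (ℤ × ι)} (hg : g ∈ centralizer {shift ι})
    (q : ℤ) (i : ι) : g (q, i) = ((g (0, i)).1 + q, (g (0, i)).2) := by
  have step (p : ℤ × ι) : g (p.1 + 1, p.2) = ((g p).1 + 1, (g p).2) := by
    simpa [shift, Prod.map] using congrArg (· p) (mem_centralizer_singleton_iff.mp hg)
  induction q using Int.induction_on with
  | zero => simp
  | succ q ih => rw [step (q, i), ih, add_assoc]
  | pred q ih =>
    obtain ⟨h1, h2⟩ := Prod.ext_iff.mp (step (-q - 1, i))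
    simp only [sub_add_cancel, ih] at h1 h2
    ext
    · linarith
    · exact h2.symm

lemma snd_symm_apply_snd_apply {g : Perm (ℤ × ι)} (hg : g ∈ centralizer {shift ι}) (i : ι) :
    (g.symm (0, (g (0, i)).2)).2 = i := by
  have h := apply_eq_of_mem_centralizer_shift (inv_mem hg) (g (0, i)).1 (g (0, i)).2
  rw [Prod.mk.eta, Perm.inv_def, symm_apply_apply] at h
  exact (congrArg Prod.snd h).symm

def orbitPerm (g : Perm (ℤ × ι)) (hg : g ∈ centralizer {shift ι}) : Perm ι where
  toFun i := (g (0, i)).2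
  invFun j := (g.symm (0, j)).2
  left_inv := snd_symm_apply_snd_apply hg
  right_inv := snd_symm_apply_snd_apply (g := g.symm) (inv_mem hg)

def affinePerm (a : ι → ℤ) (σ : Perm ι) : Perm (ℤ × ι) where
  toFun p := (p.1 + a (σ p.2), σ p.2)
  invFun p := (p.1 - a p.2, σ.symm p.2)
  left_inv p := by simp
  right_inv p := by simp

@[simp]
lemma affinePerm_apply (a : ι → ℤ) (σ : Perm ι) (p : ℤ × ι) :
    affinePerm a σ p = (p.1 + a (σ p.2), σ p.2) := rfl

lemma affinePerm_mem_centralizer_shift (a : ι → ℤ) (σ : Perm ι) :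
    affinePerm a σ ∈ centralizer {shift ι} := by
  rw [mem_centralizer_singleton_iff]
  ext ⟨q, i⟩ <;> simp [shift, add_right_comm]

variable (φ : Perm ι →* MulAut (Multiplicative (ι → ℤ)))
  (hφ : ∀ (σ : Perm ι) (a : Multiplicative (ι → ℤ)) (i : ι),
    Multiplicative.toAdd (φ σ a) i = Multiplicative.toAdd a (σ⁻¹ i))

def affinePermHom : SemidirectProduct (Multiplicative (ι → ℤ)) (Perm ι) φ →* Perm (ℤ × ι) where
  toFun g := affinePerm g.left.toAdd g.right
  map_one' := by ext <;> simp
  map_mul' g h := by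
    ext ⟨q, i⟩
    · simp [hφ]
      ring
    · simp

lemma affinePermHom_injective : Function.Injective (affinePermHom φ hφ) := by
  rw [injective_iff_map_eq_one]
  rintro ⟨a, σ⟩ h
  have h' (i : ι) : a.toAdd (σ i) = 0 ∧ σ i = i := by
    simpa [affinePermHom, Prod.ext_iff] using congrArg (· (0, i)) h
  obtain rfl : σ = 1 := Equiv.ext fun i => (h' i).2
  ext i
  · exact (h' i).1
  · rfl

lemma range_affinePermHom : (affinePermHom φ hφ).range = centralizer {shift ι} := by
  refine le_antisymm ?_ fun g hg => ?_
  · rintro _ ⟨g, rfl⟩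
    exact affinePerm_mem_centralizer_shift _ _
  · refine ⟨⟨.ofAdd fun j => (g (0, (orbitPerm g hg).symm j)).1, orbitPerm g hg⟩, ?_⟩
    ext ⟨q, i⟩ <;> simp [affinePermHom, orbitPerm, snd_symm_apply_snd_apply hg,
      apply_eq_of_mem_centralizer_shift hg q i, add_comm]

lemma permCongr_divModEquiv_addRight (n : ℕ) [NeZero n] :
    (Int.divModEquiv n).permCongr (Equiv.addRight (n : ℤ)) = shift (Fin n) := by
  ext1 p
  rw [permCongr_apply, ← eq_symm_apply]
  simp [shift]
  ring

end ExtendedAffine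

open ExtendedAffine in
/-- The set of bijections `f : ℤ → ℤ` commuting with translation by `n`
(`f (x + n) = f x + n`) is a subgroup of the permutation group of `ℤ`, and it
is isomorphic to the semidirect product `(Fin n → ℤ) ⋊ Equiv.Perm (Fin n)`,
where the symmetric group acts by permuting coordinates. -/
theorem extended_affine_symmetric_group (n : ℕ) (hn : 1 ≤ n)
    (φ : Equiv.Perm (Fin n) →* MulAut (Multiplicative (Fin n → ℤ)))
    (hφ : ∀ (σ : Equiv.Perm (Fin n)) (a : Multiplicative (Fin n → ℤ)) (i : Fin n),
      Multiplicative.toAdd (φ σ a) i = Multiplicative.toAdd a (σ⁻¹ i)) :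
    ∃ G : Subgroup (Equiv.Perm ℤ),
      (G : Set (Equiv.Perm ℤ)) = {f : Equiv.Perm ℤ | ∀ x : ℤ, f (x + n) = f x + n} ∧
      Nonempty (G ≃* SemidirectProduct (Multiplicative (Fin n → ℤ)) (Equiv.Perm (Fin n)) φ) := by
  have : NeZero n := ⟨by omega⟩
  let G := centralizer {Equiv.addRight (n : ℤ)}
  let ψ := (Int.divModEquiv n).permCongrHom
  have hG : G.map (ψ : Perm ℤ →* Perm (ℤ × Fin n)) = (affinePermHom φ hφ).range := by
    rw [map_centralizer_singleton, permCongrHom_coe, permCongr_divModEquiv_addRight,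
      range_affinePermHom]
  exact ⟨G, coe_centralizer_addRight _, ⟨(ψ.subgroupMap G).trans <|
    (MulEquiv.subgroupCongr hG).trans (MonoidHom.ofInjective (affinePermHom_injective φ hφ)).symm⟩⟩
end

section
/- For every n ≥ 1 and every set P of ordered pairs (i, j) of distinct elements of Fin n, the intersection ⋂_{(i,j) ∈ P} {x : Fin n → ℝ | x i = x j} equals Φ(r), where r is the smallest equivalence relation (setoid) on Fin n containing all pairs in P and Φ(r) = {x : Fin n → ℝ | ∀ i j, r relates i and j → x i = x j}. Hence every intersection of braid hyperplanes in ℝⁿ is of the form Φ(r) for a setoid r on Fin n. -/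
/-- Every intersection of braid hyperplanes is the subspace attached to a
partition: for a set `P` of ordered pairs of distinct indices, the intersection
`⋂_{(i,j) ∈ P} {x | x i = x j}` equals
`Φ(r) = {x | ∀ i j, r i j → x i = x j}`, where `r` is the smallest equivalence
relation on `Fin n` containing all pairs of `P`. -/
theorem braid_intersection_eq_partition_subspace (n : ℕ) (hn : 1 ≤ n)
    (P : Set (Fin n × Fin n)) (hP : ∀ p ∈ P, p.1 ≠ p.2)
    (r : Setoid (Fin n))
    (hr₁ : ∀ p ∈ P, r.r p.1 p.2)
    (hr₂ : ∀ s : Setoid (Fin n), (∀ p ∈ P, s.r p.1 p.2) → r ≤ s) :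
    (⋂ p ∈ P, {x : Fin n → ℝ | x p.1 = x p.2}) =
      {x : Fin n → ℝ | ∀ i j : Fin n, r.r i j → x i = x j} := by
  ext x
  simp only [Set.mem_iInter, Set.mem_setOf_eq]
  constructor
  · intro hx
    have := hr₂ (Setoid.ker x) (fun p hp => hx p hp)
    intro i j hij
    exact this hij
  · intro hx p hp
    exact hx p.1 p.2 (hr₁ p hp)
end
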